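/- Let λ(x,y) = 2x² + ax − 3y³ − 2cy² − by. At any point (x,y), the Hessian matrix of λ is diag(4, −18y − 4c), hence det H_λ = −8(2c + 9y). Consequently, on the beaks/lips locus (where a = −4x, b = −y(4c+9y), x² = y²(c+3y)) the Hessian determinant vanishes if and only if y = −2c/9, which for c > 0 yields the goose curve (a,b,c) = (± (8/(9√3)) c^{3/2}, 4c²/9, c). -/

import Mathlib

/-- The Jacobian determinant of the unfolding `G`. -/
noncomputable def lam (a b c : ℝ) (x y : ℝ) : ℝ :=
  2 * x ^ 2 + a * x - 3 * y ^ 3 - 2 * c * y ^ 2 - b * y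

section Hessian

variable (a b c : ℝ)

lemma hasDerivAt_lam_fst (x y : ℝ) :
    HasDerivAt (fun x => lam a b c x y) (4 * x + a) x := by
  refine (((((hasDerivAt_pow 2 x).const_mul 2).add ((hasDerivAt_id x).const_mul a)).sub_const
    (3 * y ^ 3)).sub_const (2 * c * y ^ 2) |>.sub_const (b * y)).congr_deriv ?_
  norm_num
  ring

lemma hasDerivAt_lam_snd (x y : ℝ) :
    HasDerivAt (fun y => lam a b c x y) (-9 * y ^ 2 - 4 * c * y - b) y := by
  refine ((((hasDerivAt_const y (2 * x ^ 2 + a * x)).sub ((hasDerivAt_pow 3 y).const_mul 3)).sub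
    ((hasDerivAt_pow 2 y).const_mul (2 * c))).sub ((hasDerivAt_id y).const_mul b)).congr_deriv ?_
  norm_num
  ring

lemma deriv_lam_fst (y : ℝ) : deriv (fun x => lam a b c x y) = fun x => 4 * x + a :=
  funext fun x => (hasDerivAt_lam_fst a b c x y).deriv

lemma deriv_lam_snd (x : ℝ) :
    deriv (fun y => lam a b c x y) = fun y => -9 * y ^ 2 - 4 * c * y - b :=
  funext fun y => (hasDerivAt_lam_snd a b c x y).deriv

lemma deriv_deriv_lam_fst (x y : ℝ) : deriv (deriv fun x => lam a b c x y) x = 4 := by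
  rw [deriv_lam_fst]
  exact (((hasDerivAt_id x).const_mul 4).add_const a).deriv.trans (mul_one 4)

lemma deriv_deriv_lam_snd (x y : ℝ) :
    deriv (deriv fun y => lam a b c x y) y = -18 * y - 4 * c := by
  rw [deriv_lam_snd]
  convert ((((hasDerivAt_pow 2 y).const_mul (-9)).sub
    ((hasDerivAt_id y).const_mul (4 * c))).sub_const b).deriv using 1
  norm_num
  ring

lemma deriv_fst_deriv_lam_snd (x y : ℝ) :
    deriv (fun x => deriv (fun y => lam a b c x y) y) x = 0 := by
  simp only [deriv_lam_snd, deriv_const]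

lemma deriv_snd_deriv_lam_fst (x y : ℝ) :
    deriv (fun y => deriv (fun x => lam a b c x y) x) y = 0 := by
  simp only [deriv_lam_fst, deriv_const]

end Hessian

lemma sq_goose_coeff_mul_sqrt {c : ℝ} (hc : 0 ≤ c) :
    (8 / (9 * √3) * √(c ^ 3)) ^ 2 = 64 * c ^ 3 / 243 := by
  rw [mul_pow, div_pow, mul_pow, Real.sq_sqrt (by norm_num), Real.sq_sqrt (by positivity)]
  ring

/-- The Hessian of `λ` is `diag(4, −18y − 4c)`, so `det H_λ = −8(2c+9y)`; on the
beaks/lips locus it vanishes iff `y = −2c/9`, which for `c > 0` yields the goose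
curve `(a,b,c) = (± (8/(9√3)) c^{3/2}, 4c²/9, c)`. -/
theorem stmt10 :
    (∀ a b c x y : ℝ,
      deriv (fun x' => deriv (fun x'' => lam a b c x'' y) x') x = 4 ∧
      deriv (fun y' => deriv (fun x' => lam a b c x' y') x) y = 0 ∧
      deriv (fun x' => deriv (fun y' => lam a b c x' y') y) x = 0 ∧
      deriv (fun y' => deriv (fun y'' => lam a b c x y'') y') y = -18 * y - 4 * c ∧
      4 * (-18 * y - 4 * c) - 0 * 0 = -8 * (2 * c + 9 * y)) ∧
    (∀ a b c x y : ℝ,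
      a = -4 * x → b = -y * (4 * c + 9 * y) → x ^ 2 = y ^ 2 * (c + 3 * y) →
      (-8 * (2 * c + 9 * y) = 0 ↔ y = -2 * c / 9)) ∧
    (∀ c x : ℝ, c > 0 →
      x ^ 2 = (-2 * c / 9) ^ 2 * (c + 3 * (-2 * c / 9)) →
      ((-4 * x = 8 / (9 * Real.sqrt 3) * Real.sqrt (c ^ 3) ∨
        -4 * x = -(8 / (9 * Real.sqrt 3)) * Real.sqrt (c ^ 3)) ∧
       -(-2 * c / 9) * (4 * c + 9 * (-2 * c / 9)) = 4 * c ^ 2 / 9)) := by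
  refine ⟨fun a b c x y => ?_, fun a b c x y _ _ _ => ?_, fun c x hc hx => ⟨?_, by ring⟩⟩
  · exact ⟨deriv_deriv_lam_fst a b c x y, deriv_snd_deriv_lam_fst a b c x y,
      deriv_fst_deriv_lam_snd a b c x y, deriv_deriv_lam_snd a b c x y, by ring⟩
  · constructor <;> intro h <;> linarith
  · -- At `y = -2c/9` the lips relation reads `x² = 4c³/243`, and `243 = (9√3)²`.
    have hsq : (-4 * x) ^ 2 = (8 / (9 * √3) * √(c ^ 3)) ^ 2 := by
      rw [sq_goose_coeff_mul_sqrt hc.le]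
      linear_combination 16 * hx
    rw [neg_mul _ √(c ^ 3)]
    exact sq_eq_sq_iff_eq_or_eq_neg.mp hsq
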